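/- Let u and v be nonempty finite words over a totally ordered alphabet such that u^ω ≠ v^ω, and let s and t be infinite words each of which is an infinite concatenation of words taken from the set {u, v} (i.e., there exist sequences f, g : ℕ → {u, v} such that s is the infinite concatenation f(0)f(1)f(2)⋯ and t is the infinite concatenation g(0)g(1)g(2)⋯). Then u^ω < v^ω if and only if the infinite word us is lexicographically smaller than the infinite word vt. -/

import Mathlib

variable {A : Type*} [LinearOrder A] [Inhabited A]

/-- The infinite periodic word `u^ω = uuu⋯`, as a function `ℕ → A`. -/
def omegaPow (u : List A) : ℕ → A := fun n => u.getD (n % u.length) default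

/-- Lexicographic order on infinite words: `s < t` iff at the first position where
they differ, `s` has the smaller letter. -/
def lexLt (s t : ℕ → A) : Prop := ∃ k, (∀ i < k, s i = t i) ∧ s k < t k

/-- The infinite word obtained by prepending the finite word `w` to the infinite word `s`. -/
def prepend (w : List A) (s : ℕ → A) : ℕ → A :=
  fun n => if n < w.length then w.getD n default else s (n - w.length)

/-- The finite word `w` is a prefix of the infinite word `s`. -/
def IsInfPrefix (w : List A) (s : ℕ → A) : Prop := ∀ i < w.length, w.getD i default = s i

/-- The infinite word `s` is the infinite concatenation `f(0)f(1)f(2)⋯`: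
every finite concatenation `f(0)f(1)⋯f(n-1)` is a prefix of `s`. -/
def IsInfConcat (f : ℕ → List A) (s : ℕ → A) : Prop :=
  ∀ n : ℕ, IsInfPrefix (((List.range n).map f).flatten) s

/-! ### Auxiliary machinery -/

/-- `s` has arbitrarily long prefixes that are products of blocks from `{u, v}`. -/
def GoodW (u v : List A) (s : ℕ → A) : Prop :=
  ∀ n, ∃ l : List (List A), (∀ x ∈ l, x = u ∨ x = v) ∧ n ≤ l.flatten.length ∧
    IsInfPrefix l.flatten s

lemma goodW_swap {u v : List A} {s : ℕ → A} (h : GoodW u v s) : GoodW v u s := by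
  intro n
  obtain ⟨l, h1, h2, h3⟩ := h n
  exact ⟨l, fun x hx => (h1 x hx).symm, h2, h3⟩

lemma goodW_of (u v : List A) (hu : u ≠ []) (hv : v ≠ []) (f : ℕ → List A)
    (hf : ∀ n, f n = u ∨ f n = v) (s : ℕ → A) (hs : IsInfConcat f s) : GoodW u v s := by
  intro n
  refine ⟨(List.range n).map f, ?_, ?_, hs n⟩
  · intro x hx
    simp only [List.mem_map] at hx
    obtain ⟨i, _, rfl⟩ := hx
    exact hf i
  · rw [List.length_flatten]
    have key : ∀ m : ℕ, m ≤ (((List.range m).map f).map List.length).sum := by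
      intro m
      induction m with
      | zero => simp
      | succ m ih =>
        rw [List.range_succ]
        simp only [List.map_append, List.map_cons, List.map_nil, List.sum_append,
          List.sum_cons, List.sum_nil]
        have h1 : 0 < (f m).length := by
          rcases hf m with h | h <;> rw [h] <;>
            [exact List.length_pos_iff.mpr hu; exact List.length_pos_iff.mpr hv]
        omega
    exact key n

lemma omegaPow_add (u : List A) (n : ℕ) : omegaPow u (n + u.length) = omegaPow u n := by
  simp [omegaPow, Nat.add_mod_right]

lemma prepend_append (a b : List A) (s : ℕ → A) :
    prepend (a ++ b) s = prepend a (prepend b s) := by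
  funext n
  simp only [prepend, List.length_append]
  rcases lt_or_ge n a.length with h | h
  · rw [if_pos (by omega), if_pos h, List.getD_append _ _ _ _ h]
  · rcases lt_or_ge n (a.length + b.length) with h2 | h2
    · rw [if_pos h2, if_neg (by omega), if_pos (by omega),
        List.getD_append_right _ _ _ _ h]
    · rw [if_neg (by omega), if_neg (by omega), if_neg (by omega)]
      congr 1; omega

lemma lexLt_prepend (w : List A) {s t : ℕ → A} (h : lexLt s t) :
    lexLt (prepend w s) (prepend w t) := by
  obtain ⟨k, hk, hlt⟩ := h
  refine ⟨k + w.length, fun i hi => ?_, ?_⟩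
  · simp only [prepend]
    split
    · rfl
    · next h' => exact hk _ (by omega)
  · simp only [prepend, if_neg (by omega : ¬ k + w.length < w.length),
      Nat.add_sub_cancel]
    exact hlt

lemma omegaPow_rotate (u w : List A) (hu : u ≠ []) (hw : w ≠ []) (n : ℕ) :
    omegaPow (u ++ w) (n + u.length) = omegaPow (w ++ u) n := by
  have hu' : 0 < u.length := List.length_pos_iff.mpr hu
  have hw' : 0 < w.length := List.length_pos_iff.mpr hw
  set L := u.length + w.length with hL
  have hL' : 0 < L := by omega
  have hr : n % L < L := Nat.mod_lt _ hL'
  set r := n % L with hrdef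
  simp only [omegaPow, List.length_append]
  have h1 : (n + u.length) % (u.length + w.length) = (r + u.length) % L := by
    rw [hrdef, ← hL, Nat.mod_add_mod]
  have h2 : n % (w.length + u.length) = r := by
    rw [hrdef, hL, Nat.add_comm u.length w.length]
  rw [h1, h2]
  rcases lt_or_ge r w.length with h | h
  · rw [Nat.mod_eq_of_lt (show r + u.length < L by omega),
      List.getD_append_right _ _ _ _ (by omega),
      List.getD_append _ _ _ _ (by omega)]
    congr 1; omega
  · have e1 : (r + u.length) % L = r - w.length := by
      rw [Nat.mod_eq_sub_mod (show L ≤ r + u.length by omega),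
        Nat.mod_eq_of_lt (show r + u.length - L < L by omega)]
      omega
    rw [e1, List.getD_append _ _ _ _ (by omega),
      List.getD_append_right _ _ _ _ (by omega)]

lemma goodW_first {u w : List A} {s : ℕ → A} (hu : u ≠ []) (h : GoodW u (u ++ w) s) :
    ∀ i < u.length, s i = u.getD i default := by
  intro i hi
  obtain ⟨l, h1, h2, h3⟩ := h u.length
  cases l with
  | nil =>
    exfalso
    have := List.length_pos_iff.mpr hu
    simp only [List.flatten_nil, List.length_nil] at h2
    omega
  | cons x l' =>
    have hx := h1 x (List.mem_cons_self)
    have hil : i < (x :: l').flatten.length := by omega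
    have hpre : (x :: l').flatten.getD i default = u.getD i default := by
      rw [List.flatten_cons]
      rcases hx with rfl | rfl
      · rw [List.getD_append _ _ _ _ hi]
      · rw [List.getD_append _ _ _ _ (by simp only [List.length_append]; omega),
          List.getD_append _ _ _ _ hi]
    rw [← h3 i hil, hpre]

/-- Rewriting products of `{u, u++w}` as products of `{u, w++u}` after shifting. -/
lemma rewrite_blocks (u w : List A) :
    ∀ l : List (List A), (∀ x ∈ l, x = u ∨ x = u ++ w) →
      (∃ y : List (List A), (∀ x ∈ y, x = u ∨ x = w ++ u) ∧
        (l.flatten = y.flatten ∨ l.flatten = y.flatten ++ w)) ∧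
      (∃ y : List (List A), (∀ x ∈ y, x = u ∨ x = w ++ u) ∧
        (w ++ l.flatten = y.flatten ∨ w ++ l.flatten = y.flatten ++ w)) := by
  intro l
  induction l with
  | nil =>
    intro _
    exact ⟨⟨[], by simp, Or.inl rfl⟩, ⟨[], by simp, Or.inr (by simp)⟩⟩
  | cons x l ih =>
    intro hl
    have hx := hl x (List.mem_cons_self)
    obtain ⟨⟨yA, hyA, hA⟩, ⟨yB, hyB, hB⟩⟩ := ih (fun z hz => hl z (List.mem_cons_of_mem x hz))
    constructor
    · rcases hx with h0 | h0
      · refine ⟨u :: yA, ?_, ?_⟩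
        · intro z hz
          rcases List.mem_cons.mp hz with rfl | hz
          · exact Or.inl rfl
          · exact hyA z hz
        · rcases hA with h | h
          · left; rw [List.flatten_cons, List.flatten_cons, h0, h]
          · right; rw [List.flatten_cons, List.flatten_cons, h0, h]
            simp [List.append_assoc]
      · refine ⟨u :: yB, ?_, ?_⟩
        · intro z hz
          rcases List.mem_cons.mp hz with rfl | hz
          · exact Or.inl rfl
          · exact hyB z hz
        · rcases hB with h | h
          · left
            rw [List.flatten_cons, List.flatten_cons, h0, List.append_assoc, h]
          · right
            rw [List.flatten_cons, List.flatten_cons, h0, List.append_assoc, h]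
            simp [List.append_assoc]
    · rcases hx with h0 | h0
      · refine ⟨(w ++ u) :: yA, ?_, ?_⟩
        · intro z hz
          rcases List.mem_cons.mp hz with rfl | hz
          · exact Or.inr rfl
          · exact hyA z hz
        · rcases hA with h | h
          · left
            rw [List.flatten_cons, List.flatten_cons, h0, h]
            simp [List.append_assoc]
          · right
            rw [List.flatten_cons, List.flatten_cons, h0, h]
            simp [List.append_assoc]
      · refine ⟨(w ++ u) :: yB, ?_, ?_⟩
        · intro z hz
          rcases List.mem_cons.mp hz with rfl | hz
          · exact Or.inr rfl
          · exact hyB z hz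
        · rcases hB with h | h
          · left
            rw [List.flatten_cons, List.flatten_cons, h0,
              show w ++ ((u ++ w) ++ l.flatten) = (w ++ u) ++ (w ++ l.flatten) by
                simp [List.append_assoc], h]
          · right
            rw [List.flatten_cons, List.flatten_cons, h0,
              show w ++ ((u ++ w) ++ l.flatten) = (w ++ u) ++ (w ++ l.flatten) by
                simp [List.append_assoc], h]
            simp [List.append_assoc]

lemma goodW_shift {u w : List A} {s : ℕ → A} (hu : u ≠ []) (hw : w ≠ [])
    (h : GoodW u (u ++ w) s) : GoodW u (w ++ u) (fun n => s (n + u.length)) := by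
  intro n
  obtain ⟨l, h1, h2, h3⟩ := h (n + u.length + w.length)
  have hu' : 0 < u.length := List.length_pos_iff.mpr hu
  cases l with
  | nil =>
    exfalso
    simp only [List.flatten_nil, List.length_nil] at h2
    omega
  | cons x l' =>
    have hx := h1 x (List.mem_cons_self)
    have hl' : ∀ z ∈ l', z = u ∨ z = u ++ w := fun z hz => h1 z (List.mem_cons_of_mem x hz)
    have hdec : ∃ y : List (List A), (∀ z ∈ y, z = u ∨ z = w ++ u) ∧
        ((x :: l').flatten = u ++ y.flatten ∨ (x :: l').flatten = u ++ (y.flatten ++ w)) := by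
      rcases hx with h0 | h0
      · obtain ⟨⟨y, hy, hA⟩, _⟩ := rewrite_blocks u w l' hl'
        refine ⟨y, hy, ?_⟩
        rcases hA with h | h
        · left; rw [List.flatten_cons, h0, h]
        · right; rw [List.flatten_cons, h0, h]
      · obtain ⟨_, ⟨y, hy, hB⟩⟩ := rewrite_blocks u w l' hl'
        refine ⟨y, hy, ?_⟩
        rcases hB with h | h
        · left; rw [List.flatten_cons, h0, List.append_assoc, h]
        · right; rw [List.flatten_cons, h0, List.append_assoc, h]
    obtain ⟨y, hy, hcase⟩ := hdec
    refine ⟨y, hy, ?_, ?_⟩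
    · rcases hcase with h | h <;>
      · have := congrArg List.length h
        simp only [List.length_append] at this
        omega
    · intro i hi
      have hilen : i + u.length < (x :: l').flatten.length := by
        rcases hcase with h | h <;>
        · have := congrArg List.length h
          simp only [List.length_append] at this
          omega
      have e1 : (x :: l').flatten.getD (i + u.length) default = y.flatten.getD i default := by
        rcases hcase with h | h
        · rw [h, List.getD_append_right _ _ _ _ (by omega), Nat.add_sub_cancel]
        · rw [h, List.getD_append_right _ _ _ _ (by omega), Nat.add_sub_cancel,
            List.getD_append _ _ _ _ hi]
      have := h3 (i + u.length) hilen
      rw [e1] at this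
      exact this

lemma main_lemma : ∀ k : ℕ, ∀ u v : List A, u ≠ [] → v ≠ [] →
    (∀ i < k, omegaPow u i = omegaPow v i) → omegaPow u k < omegaPow v k →
    ∀ s t : ℕ → A, GoodW u v s → GoodW u v t → lexLt (prepend u s) (prepend v t) := by
  intro k
  induction k using Nat.strong_induction_on with
  | _ k IH =>
    intro u v hu hv hagree hlt s t hsG htG
    have hu' : 0 < u.length := List.length_pos_iff.mpr hu
    have hv' : 0 < v.length := List.length_pos_iff.mpr hv
    by_cases hk : k < u.length ∧ k < v.length
    · -- base case: mismatch inside both words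
      have hus : ∀ j, j < u.length → prepend u s j = omegaPow u j := by
        intro j hj
        simp [prepend, omegaPow, if_pos hj, Nat.mod_eq_of_lt hj]
      have hvt : ∀ j, j < v.length → prepend v t j = omegaPow v j := by
        intro j hj
        simp [prepend, omegaPow, if_pos hj, Nat.mod_eq_of_lt hj]
      refine ⟨k, fun i hi => ?_, ?_⟩
      · rw [hus i (by omega), hvt i (by omega)]
        exact hagree i hi
      · rw [hus k hk.1, hvt k hk.2]
        exact hlt
    · have hmin : u.length ≤ k ∨ v.length ≤ k := by
        rcases not_and_or.mp hk with h | h <;> omega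
      have hpref : ∀ i < min u.length v.length, u.getD i default = v.getD i default := by
        intro i hi
        have hik : i < k := by omega
        have := hagree i hik
        simpa [omegaPow, Nat.mod_eq_of_lt (show i < u.length by omega),
          Nat.mod_eq_of_lt (show i < v.length by omega)] using this
      rcases le_or_gt u.length v.length with hle | hlt'
      · -- v = u ++ w
        set w := v.drop u.length with hwdef
        have h1 : u = v.take u.length := by
          apply List.ext_getElem
          · simp [hle]
          · intro i hi1 hi2
            have := hpref i (by omega)
            rw [List.getD_eq_getElem u default hi1,
              List.getD_eq_getElem v default (by omega)] at this
            simpa using this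
        have hvw : v = u ++ w := by
          rw [h1, hwdef]
          exact (List.take_append_drop u.length v).symm
        have hwne : w ≠ [] := by
          intro h0
          have huv : u = v := by rw [hvw, h0, List.append_nil]
          rw [huv] at hlt
          exact lt_irrefl _ hlt
        have hwu : (w ++ u) ≠ [] := by simp [hu]
        have hag' : ∀ i < k - u.length, omegaPow u i = omegaPow (w ++ u) i := by
          intro i hi
          have e2 : omegaPow (w ++ u) i = omegaPow (u ++ w) (i + u.length) :=
            (omegaPow_rotate u w hu hwne i).symm
          rw [← omegaPow_add u i, e2, ← hvw]
          exact hagree _ (by omega)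
        have hlt2 : omegaPow u (k - u.length) < omegaPow (w ++ u) (k - u.length) := by
          have e1 : omegaPow u (k - u.length) = omegaPow u k := by
            conv_rhs => rw [show k = (k - u.length) + u.length by omega]
            rw [omegaPow_add]
          have e2 : omegaPow (w ++ u) (k - u.length) = omegaPow v k := by
            rw [← omegaPow_rotate u w hu hwne, ← hvw,
              show (k - u.length) + u.length = k by omega]
          rw [e1, e2]
          exact hlt
        have hsG' : GoodW u (u ++ w) s := hvw ▸ hsG
        have htG' : GoodW u (u ++ w) t := hvw ▸ htG
        set σ : ℕ → A := fun n => s (n + u.length) with hσdef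
        set τ : ℕ → A := fun n => t (n + u.length) with hτdef
        have hσ : GoodW u (w ++ u) σ := goodW_shift hu hwne hsG'
        have hτ : GoodW u (w ++ u) τ := goodW_shift hu hwne htG'
        have key := IH (k - u.length) (by omega) u (w ++ u) hu hwu hag' hlt2 σ τ hσ hτ
        have hs_eq : prepend u σ = s := by
          funext n
          simp only [prepend]
          split
          · next h => exact (goodW_first hu hsG' n h).symm
          · next h =>
            simp only [hσdef]
            congr 1
            omega
        have ht_eq : prepend u τ = t := by
          funext n
          simp only [prepend]
          split
          · next h => exact (goodW_first hu htG' n h).symm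
          · next h =>
            simp only [hτdef]
            congr 1
            omega
        have hgoal : prepend v t = prepend u (prepend (w ++ u) τ) := by
          rw [hvw, ← ht_eq, ← prepend_append, ← prepend_append, List.append_assoc]
        rw [hgoal]
        rw [hs_eq] at key
        exact lexLt_prepend u key
      · -- u = v ++ w
        set w := u.drop v.length with hwdef
        have h1 : v = u.take v.length := by
          apply List.ext_getElem
          · simp; omega
          · intro i hi1 hi2
            have := hpref i (by omega)
            rw [List.getD_eq_getElem u default (by omega),
              List.getD_eq_getElem v default hi1] at this
            simpa using this.symm
        have huw : u = v ++ w := by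
          rw [h1, hwdef]
          exact (List.take_append_drop v.length u).symm
        have hwne : w ≠ [] := by
          have : w.length = u.length - v.length := by rw [hwdef, List.length_drop]
          intro h0
          rw [h0] at this
          simp at this
          omega
        have hwv : (w ++ v) ≠ [] := by simp [hv]
        have hag' : ∀ i < k - v.length, omegaPow (w ++ v) i = omegaPow v i := by
          intro i hi
          have e2 : omegaPow (w ++ v) i = omegaPow (v ++ w) (i + v.length) :=
            (omegaPow_rotate v w hv hwne i).symm
          rw [e2, ← huw, ← omegaPow_add v i]
          exact hagree _ (by omega)
        have hlt2 : omegaPow (w ++ v) (k - v.length) < omegaPow v (k - v.length) := by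
          have e1 : omegaPow v (k - v.length) = omegaPow v k := by
            conv_rhs => rw [show k = (k - v.length) + v.length by omega]
            rw [omegaPow_add]
          have e2 : omegaPow (w ++ v) (k - v.length) = omegaPow u k := by
            rw [← omegaPow_rotate v w hv hwne, ← huw,
              show (k - v.length) + v.length = k by omega]
          rw [e1, e2]
          exact hlt
        have hsG' : GoodW v (v ++ w) s := goodW_swap (huw ▸ hsG)
        have htG' : GoodW v (v ++ w) t := goodW_swap (huw ▸ htG)
        set σ : ℕ → A := fun n => s (n + v.length) with hσdef
        set τ : ℕ → A := fun n => t (n + v.length) with hτdef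
        have hσ : GoodW (w ++ v) v σ := goodW_swap (goodW_shift hv hwne hsG')
        have hτ : GoodW (w ++ v) v τ := goodW_swap (goodW_shift hv hwne htG')
        have key := IH (k - v.length) (by omega) (w ++ v) v hwv hv hag' hlt2 σ τ hσ hτ
        have hs_eq : prepend v σ = s := by
          funext n
          simp only [prepend]
          split
          · next h => exact (goodW_first hv hsG' n h).symm
          · next h =>
            simp only [hσdef]
            congr 1
            omega
        have ht_eq : prepend v τ = t := by
          funext n
          simp only [prepend]
          split
          · next h => exact (goodW_first hv htG' n h).symm
          · next h =>
            simp only [hτdef]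
            congr 1
            omega
        have hgoal : prepend u s = prepend v (prepend (w ++ v) σ) := by
          rw [huw, ← hs_eq, ← prepend_append, ← prepend_append, List.append_assoc]
        rw [hgoal, ← ht_eq]
        exact lexLt_prepend v key

lemma lexLt_asymm {s t : ℕ → A} (h1 : lexLt s t) (h2 : lexLt t s) : False := by
  obtain ⟨k1, e1, l1⟩ := h1
  obtain ⟨k2, e2, l2⟩ := h2
  rcases lt_trichotomy k1 k2 with h | rfl | h
  · exact absurd (e2 k1 h) (ne_of_gt l1)
  · exact absurd l2 (not_lt.mpr (le_of_lt l1))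
  · exact absurd (e1 k2 h) (ne_of_gt l2)

lemma lexLt_trichotomy {s t : ℕ → A} (h : s ≠ t) : lexLt s t ∨ lexLt t s := by
  classical
  have hex : ∃ k, s k ≠ t k := Function.ne_iff.mp h
  have hk := Nat.find_spec hex
  have hmin : ∀ i < Nat.find hex, s i = t i := by
    intro i hi
    by_contra hc
    exact Nat.find_min hex hi hc
  rcases lt_or_gt_of_ne hk with h' | h'
  · exact Or.inl ⟨Nat.find hex, hmin, h'⟩
  · exact Or.inr ⟨Nat.find hex, fun i hi => (hmin i hi).symm, h'⟩

/-- If `u^ω ≠ v^ω` and `s, t` are infinite concatenations of words from `{u, v}`,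
then `u^ω < v^ω` iff `us < vt`. -/
theorem omegaPow_lt_iff_prepend_lt (u v : List A) (hu : u ≠ []) (hv : v ≠ [])
    (hne : omegaPow u ≠ omegaPow v)
    (f g : ℕ → List A)
    (hf : ∀ n, f n = u ∨ f n = v) (hg : ∀ n, g n = u ∨ g n = v)
    (s t : ℕ → A) (hs : IsInfConcat f s) (ht : IsInfConcat g t) :
    lexLt (omegaPow u) (omegaPow v) ↔ lexLt (prepend u s) (prepend v t) := by
  have hsG : GoodW u v s := goodW_of u v hu hv f hf s hs
  have htG : GoodW u v t := goodW_of u v hu hv g hg t ht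
  constructor
  · rintro ⟨k, hag, hlt⟩
    exact main_lemma k u v hu hv hag hlt s t hsG htG
  · intro h
    rcases lexLt_trichotomy hne with h1 | h1
    · exact h1
    · obtain ⟨k, hag, hlt⟩ := h1
      exact absurd (main_lemma k v u hv hu hag hlt t s (goodW_swap htG) (goodW_swap hsG))
        (fun h2 => lexLt_asymm h h2)
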